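/- arXiv:2306.15038 — 13 statements merged into one kernel-verified Lean document; each statement's English description precedes it below -/
import Mathlib

section
/- Let X be an infinite-dimensional separable Hilbert space over 𝕜 (𝕜 = ℝ or ℂ) and let A : X → X be a bounded linear operator. Then the following are equivalent: (i) for every frame (f_n)_{n∈ℕ} in X, the family (A f_n)_{n∈ℕ} is a frame in X; (ii) there exists a frame (f_n)_{n∈ℕ} in X such that (A f_n)_{n∈ℕ} is a frame in X; (iii) A is surjective. -/
/-- A family `f : ℕ → X` in a Hilbert space `X` over `𝕜` is a frame if there exist
constants `0 < c ≤ C < ∞` such that `c‖x‖² ≤ ∑' n, |⟨x, f n⟩|² ≤ C‖x‖²` for all `x`. -/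
def IsFrame (𝕜 : Type*) {X : Type*} [RCLike 𝕜] [NormedAddCommGroup X]
    [InnerProductSpace 𝕜 X] (f : ℕ → X) : Prop :=
  ∃ c C : ℝ, 0 < c ∧ c ≤ C ∧ ∀ x : X,
    c * ‖x‖ ^ 2 ≤ ∑' n, ‖(inner 𝕜 x (f n) : 𝕜)‖ ^ 2 ∧
      ∑' n, ‖(inner 𝕜 x (f n) : 𝕜)‖ ^ 2 ≤ C * ‖x‖ ^ 2

/-!
The frame coefficients of `(A f n)` at `y` are those of `(f n)` at `A† y`. Hence, for a frame
`f`, the family `A ∘ f` is a frame exactly when `A†` is bounded below, and this is equivalent to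
the surjectivity of `A`: one direction is the open mapping theorem, for the other `A A†` is then
coercive and therefore invertible. Frames exist because a separable Hilbert space has a
countable Hilbert basis, which extended by zero along an injection into `ℕ` is a Parseval frame.
-/

open scoped InnerProductSpace InnerProduct

section Frames

variable {𝕜 X Y : Type*} [RCLike 𝕜] [NormedAddCommGroup X] [InnerProductSpace 𝕜 X]
  [NormedAddCommGroup Y] [InnerProductSpace 𝕜 Y]

lemma Orthonormal.countable [TopologicalSpace.SeparableSpace X] {ι : Type*} {v : ι → X}
    (hv : Orthonormal 𝕜 v) : Countable ι := by
  refine Pairwise.countable_of_isOpen_disjoint (s := fun i => Metric.ball (v i) 2⁻¹)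
    (fun i j hij => Metric.ball_disjoint_ball ?_) (fun _ => Metric.isOpen_ball)
    (fun _ => Metric.nonempty_ball.2 (by norm_num))
  have hsq : ‖v i - v j‖ ^ 2 = 2 := by
    rw [@norm_sub_sq 𝕜, hv.inner_eq_zero hij, hv.norm_eq_one, hv.norm_eq_one]
    norm_num
  rw [dist_eq_norm]
  nlinarith [norm_nonneg (v i - v j)]

lemma HilbertBasis.hasSum_norm_inner_sq {ι : Type*} (b : HilbertBasis ι 𝕜 X) (x : X) :
    HasSum (fun i => ‖⟪x, b i⟫_𝕜‖ ^ 2) (‖x‖ ^ 2) := by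
  have := lp.hasSum_norm (p := 2) (by norm_num) (b.repr x)
  simpa [b.repr_apply_apply, norm_inner_symm] using this

lemma isFrame_of_bounds {f : ℕ → X} {c C : ℝ} (hc : 0 < c)
    (h : ∀ x, c * ‖x‖ ^ 2 ≤ ∑' n, ‖⟪x, f n⟫_𝕜‖ ^ 2 ∧ ∑' n, ‖⟪x, f n⟫_𝕜‖ ^ 2 ≤ C * ‖x‖ ^ 2) :
    IsFrame 𝕜 f :=
  ⟨c, max c C, hc, le_max_left _ _, fun x =>
    ⟨(h x).1, (h x).2.trans (by gcongr; exact le_max_right _ _)⟩⟩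

variable (𝕜 X) in
lemma exists_isFrame [CompleteSpace X] [TopologicalSpace.SeparableSpace X] :
    ∃ f : ℕ → X, IsFrame 𝕜 f := by
  obtain ⟨w, b, -⟩ := exists_hilbertBasis 𝕜 X
  have : Countable w := b.orthonormal.countable
  obtain ⟨e, he⟩ := Countable.exists_injective_nat w
  refine ⟨Function.extend e b 0, isFrame_of_bounds one_pos (C := 1) fun x => ?_⟩
  have hsum : HasSum (fun n => ‖⟪x, Function.extend e b 0 n⟫_𝕜‖ ^ 2) (‖x‖ ^ 2) := by
    convert (hasSum_extend_zero he).2 (b.hasSum_norm_inner_sq x) using 2 with n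
    rw [Function.apply_extend (fun v => ‖⟪x, v⟫_𝕜‖ ^ 2)]
    simp [Function.comp_def, Pi.zero_def]
  simp [hsum.tsum_eq]

section Adjoint

variable [CompleteSpace X] [CompleteSpace Y]

lemma tsum_norm_inner_map_sq (A : X →L[𝕜] Y) (f : ℕ → X) (y : Y) :
    ∑' n, ‖⟪y, A (f n)⟫_𝕜‖ ^ 2 = ∑' n, ‖⟪(A†) y, f n⟫_𝕜‖ ^ 2 := by
  simp_rw [ContinuousLinearMap.adjoint_inner_left]

lemma ContinuousLinearMap.surjective_iff_exists_le_norm_adjoint_sq (A : X →L[𝕜] Y) :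
    Function.Surjective A ↔ ∃ m > 0, ∀ y, m * ‖y‖ ^ 2 ≤ ‖(A†) y‖ ^ 2 := by
  constructor
  · intro hA
    obtain ⟨C, hC, hpre⟩ := A.exists_preimage_norm_le hA
    refine ⟨(C ^ 2)⁻¹, by positivity, fun y => ?_⟩
    obtain ⟨x, rfl, hx⟩ := hpre y
    have hCS : ‖A x‖ ^ 2 ≤ ‖x‖ * ‖(A†) (A x)‖ := by
      have := norm_inner_le_norm (𝕜 := 𝕜) x ((A†) (A x))
      rwa [adjoint_inner_right, inner_self_eq_norm_sq_to_K, norm_pow, RCLike.norm_ofReal,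
        abs_norm] at this
    have hle : ‖A x‖ ≤ C * ‖(A†) (A x)‖ := by
      rcases (norm_nonneg (A x)).eq_or_lt with h0 | hpos
      · rw [← h0]; positivity
      · refine le_of_mul_le_mul_left ?_ hpos
        calc ‖A x‖ * ‖A x‖ = ‖A x‖ ^ 2 := (sq _).symm
          _ ≤ ‖x‖ * ‖(A†) (A x)‖ := hCS
          _ ≤ C * ‖A x‖ * ‖(A†) (A x)‖ := by gcongr
          _ = ‖A x‖ * (C * ‖(A†) (A x)‖) := by ring
    rw [inv_mul_le_iff₀ (by positivity), ← mul_pow]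
    gcongr
  · rintro ⟨m, hm, hA⟩
    have hT : IsUnit (A ∘L A†) :=
      isUnit_of_forall_le_norm_inner_map _ (c := ⟨m, hm.le⟩) hm fun y => by
        rw [comp_apply, ← adjoint_inner_right, inner_self_eq_norm_sq_to_K, norm_pow,
          RCLike.norm_ofReal, abs_norm, mul_comm]
        exact hA y
    intro y
    obtain ⟨x, hx⟩ := (isUnit_iff_bijective.1 hT).2 y
    exact ⟨(A†) x, hx⟩

lemma IsFrame.map_of_le_norm_adjoint_sq {f : ℕ → X} (hf : IsFrame 𝕜 f) (A : X →L[𝕜] Y) {m : ℝ}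
    (hm : 0 < m) (hA : ∀ y, m * ‖y‖ ^ 2 ≤ ‖(A†) y‖ ^ 2) : IsFrame 𝕜 fun n => A (f n) := by
  obtain ⟨c, C, hc, hcC, hf⟩ := hf
  refine isFrame_of_bounds (mul_pos hc hm) (C := C * ‖A†‖ ^ 2) fun y => ?_
  rw [tsum_norm_inner_map_sq]
  obtain ⟨hlower, hupper⟩ := hf ((A†) y)
  constructor
  · calc c * m * ‖y‖ ^ 2 = c * (m * ‖y‖ ^ 2) := mul_assoc _ _ _
      _ ≤ c * ‖(A†) y‖ ^ 2 := by gcongr; exact hA y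
      _ ≤ _ := hlower
  · calc _ ≤ C * ‖(A†) y‖ ^ 2 := hupper
      _ ≤ C * (‖A†‖ * ‖y‖) ^ 2 := by
        have := hc.le.trans hcC
        gcongr
        exact (A†).le_opNorm y
      _ = C * ‖A†‖ ^ 2 * ‖y‖ ^ 2 := by ring

lemma IsFrame.exists_le_norm_adjoint_sq_of_map {f : ℕ → X} (hf : IsFrame 𝕜 f) {A : X →L[𝕜] Y}
    (hAf : IsFrame 𝕜 fun n => A (f n)) : ∃ m > 0, ∀ y, m * ‖y‖ ^ 2 ≤ ‖(A†) y‖ ^ 2 := by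
  obtain ⟨c, C, hc, hcC, hf⟩ := hf
  obtain ⟨c', _, hc', -, hAf⟩ := hAf
  have hC := hc.trans_le hcC
  refine ⟨c' / C, by positivity, fun y => ?_⟩
  have := (hAf y).1.trans ((tsum_norm_inner_map_sq A f y).trans_le (hf ((A†) y)).2)
  rw [div_mul_eq_mul_div, div_le_iff₀ hC]
  linarith

end Adjoint

end Frames

theorem stmt0_general (𝕜 X : Type*) [RCLike 𝕜] [NormedAddCommGroup X]
    [InnerProductSpace 𝕜 X] [CompleteSpace X] [TopologicalSpace.SeparableSpace X]
    (A : X →L[𝕜] X) :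
    List.TFAE
      [∀ f : ℕ → X, IsFrame 𝕜 f → IsFrame 𝕜 (fun n => A (f n)),
       ∃ f : ℕ → X, IsFrame 𝕜 f ∧ IsFrame 𝕜 (fun n => A (f n)),
       Function.Surjective A] := by
  tfae_have 1 → 2 := fun hA => by
    obtain ⟨f, hf⟩ := exists_isFrame 𝕜 X
    exact ⟨f, hf, hA f hf⟩
  tfae_have 2 → 3 := fun ⟨f, hf, hAf⟩ =>
    A.surjective_iff_exists_le_norm_adjoint_sq.2 (hf.exists_le_norm_adjoint_sq_of_map hAf)
  tfae_have 3 → 1 := fun hA f hf => by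
    obtain ⟨m, hm, hAm⟩ := A.surjective_iff_exists_le_norm_adjoint_sq.1 hA
    exact hf.map_of_le_norm_adjoint_sq A hm hAm
  tfae_finish

theorem stmt0 (𝕜 X : Type*) [RCLike 𝕜] [NormedAddCommGroup X]
    [InnerProductSpace 𝕜 X] [CompleteSpace X] [TopologicalSpace.SeparableSpace X]
    (hX : ¬ FiniteDimensional 𝕜 X) (A : X →L[𝕜] X) :
    List.TFAE
      [∀ f : ℕ → X, IsFrame 𝕜 f → IsFrame 𝕜 (fun n => A (f n)),
       ∃ f : ℕ → X, IsFrame 𝕜 f ∧ IsFrame 𝕜 (fun n => A (f n)),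
       Function.Surjective A] :=
  stmt0_general 𝕜 X A
end

section
/- Let X be a Hilbert space over 𝕜 (𝕜 = ℝ or ℂ), let (φ_n)_{n∈ℕ} be a Parseval frame for X, and let A : X → X be a bounded linear operator. Then (A φ_n)_{n∈ℕ} is a Parseval frame for X if and only if the adjoint A* is an isometry, i.e. ‖A* f‖ = ‖f‖ for all f ∈ X. -/
/-- A family `φ : ℕ → X` in a Hilbert space `X` over `𝕜` is a Parseval frame if
`∑' n, |⟨x, φ n⟩|² = ‖x‖²` for every `x ∈ X`. -/
def IsParsevalFrame (𝕜 : Type*) {X : Type*} [RCLike 𝕜] [NormedAddCommGroup X]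
    [InnerProductSpace 𝕜 X] (φ : ℕ → X) : Prop :=
  ∀ x : X, ∑' n, ‖(inner 𝕜 x (φ n) : 𝕜)‖ ^ 2 = ‖x‖ ^ 2

theorem IsParsevalFrame.tsum_norm_inner_map_sq {𝕜 X : Type*} [RCLike 𝕜] [NormedAddCommGroup X]
    [InnerProductSpace 𝕜 X] [CompleteSpace X] {φ : ℕ → X} (hφ : IsParsevalFrame 𝕜 φ)
    (A : X →L[𝕜] X) (x : X) :
    ∑' n, ‖(inner 𝕜 x (A (φ n)) : 𝕜)‖ ^ 2 = ‖ContinuousLinearMap.adjoint A x‖ ^ 2 := by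
  simp only [← ContinuousLinearMap.adjoint_inner_left]
  exact hφ _

theorem stmt1 (𝕜 X : Type*) [RCLike 𝕜] [NormedAddCommGroup X]
    [InnerProductSpace 𝕜 X] [CompleteSpace X]
    (φ : ℕ → X) (hφ : IsParsevalFrame 𝕜 φ) (A : X →L[𝕜] X) :
    IsParsevalFrame 𝕜 (fun n => A (φ n)) ↔
      ∀ f : X, ‖ContinuousLinearMap.adjoint A f‖ = ‖f‖ := by
  refine forall_congr' fun f => ?_
  rw [hφ.tsum_norm_inner_map_sq A f]
  exact sq_eq_sq₀ (norm_nonneg _) (norm_nonneg _)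
end

section
/- Let X be a Hilbert space over 𝕜 (𝕜 = ℝ or ℂ) with an orthonormal (Hilbert) basis (e_n)_{n∈ℕ}. A family (φ_n)_{n∈ℕ} in X is a Parseval frame for X if and only if there exists a bounded linear operator U : X → X whose adjoint U* is an isometry (‖U* f‖ = ‖f‖ for all f ∈ X) such that φ_n = U e_n for all n ∈ ℕ. -/
open scoped InnerProductSpace lp

theorem lp.norm_sq_eq_tsum {ι : Type*} {E : ι → Type*} [∀ i, NormedAddCommGroup (E i)]
    (f : lp E 2) : ‖f‖ ^ 2 = ∑' i, ‖f i‖ ^ 2 := by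
  simpa using lp.norm_rpow_eq_tsum (p := 2) (by norm_num) f

section

variable {ι 𝕜 X : Type*} [RCLike 𝕜] [NormedAddCommGroup X] [InnerProductSpace 𝕜 X]

theorem HilbertBasis.tsum_norm_inner_sq (b : HilbertBasis ι 𝕜 X) (x : X) :
    ∑' i, ‖⟪b i, x⟫_𝕜‖ ^ 2 = ‖x‖ ^ 2 := by
  simp only [← b.repr_apply_apply, ← lp.norm_sq_eq_tsum, LinearIsometryEquiv.norm_map]

theorem HilbertBasis.inner_repr_symm (b : HilbertBasis ι 𝕜 X) (c : ℓ²(ι, 𝕜)) (i : ι) :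
    ⟪b i, b.repr.symm c⟫_𝕜 = c i := by
  rw [← b.repr_apply_apply, LinearIsometryEquiv.apply_symm_apply]

end

namespace IsParsevalFrame

variable {𝕜 X : Type*} [RCLike 𝕜] [NormedAddCommGroup X] [InnerProductSpace 𝕜 X] {φ : ℕ → X}

/-- A divergent series has `tsum` equal to `0`, which here would force `x = 0`. -/
theorem summable_norm_inner_sq (hφ : IsParsevalFrame 𝕜 φ) (x : X) :
    Summable fun n => ‖⟪φ n, x⟫_𝕜‖ ^ 2 := by
  simp_rw [norm_inner_symm (φ _)]
  by_contra hns
  have hx : x = 0 := by simpa [tsum_eq_zero_of_not_summable hns, eq_comm] using hφ x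
  simp [hx, summable_zero] at hns

theorem memℓp_inner (hφ : IsParsevalFrame 𝕜 φ) (x : X) :
    Memℓp (fun n => ⟪φ n, x⟫_𝕜) 2 :=
  memℓp_gen (by simpa using hφ.summable_norm_inner_sq x)

def analysis (hφ : IsParsevalFrame 𝕜 φ) : X →ₗᵢ[𝕜] ℓ²(ℕ, 𝕜) where
  toFun x := ⟨fun n => ⟪φ n, x⟫_𝕜, hφ.memℓp_inner x⟩
  map_add' x y := lp.ext <| funext fun n => inner_add_right _ _ _
  map_smul' r x := lp.ext <| funext fun n => inner_smul_right _ _ _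
  norm_map' x := by
    refine (pow_left_inj₀ (norm_nonneg _) (norm_nonneg x) two_ne_zero).1 ?_
    rw [lp.norm_sq_eq_tsum, ← hφ x]
    exact tsum_congr fun n => congrArg (· ^ 2) (norm_inner_symm _ _)

end IsParsevalFrame

section

variable {𝕜 X : Type*} [RCLike 𝕜] [NormedAddCommGroup X] [InnerProductSpace 𝕜 X]
  [CompleteSpace X]

open ContinuousLinearMap

theorem isParsevalFrame_of_norm_adjoint_apply (e : HilbertBasis ℕ 𝕜 X) (U : X →L[𝕜] X)
    (hU : ∀ f : X, ‖adjoint U f‖ = ‖f‖) : IsParsevalFrame 𝕜 fun n => U (e n) := by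
  intro x
  calc ∑' n, ‖⟪x, U (e n)⟫_𝕜‖ ^ 2 = ∑' n, ‖⟪e n, adjoint U x⟫_𝕜‖ ^ 2 :=
        tsum_congr fun n => by rw [← adjoint_inner_left, norm_inner_symm]
    _ = ‖x‖ ^ 2 := by rw [e.tsum_norm_inner_sq, hU]

theorem IsParsevalFrame.exists_norm_adjoint_apply (e : HilbertBasis ℕ 𝕜 X) {φ : ℕ → X}
    (hφ : IsParsevalFrame 𝕜 φ) :
    ∃ U : X →L[𝕜] X, (∀ f : X, ‖adjoint U f‖ = ‖f‖) ∧ ∀ n : ℕ, φ n = U (e n) := by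
  let A : X →ₗᵢ[𝕜] X := e.repr.symm.toLinearIsometry.comp hφ.analysis
  refine ⟨adjoint A.toContinuousLinearMap, fun f => by rw [adjoint_adjoint]; exact A.norm_map f,
    fun n => ext_inner_right 𝕜 fun y => ?_⟩
  rw [adjoint_inner_left]
  exact (e.inner_repr_symm (hφ.analysis y) n).symm

end

theorem stmt2 (𝕜 X : Type*) [RCLike 𝕜] [NormedAddCommGroup X]
    [InnerProductSpace 𝕜 X] [CompleteSpace X]
    (e : HilbertBasis ℕ 𝕜 X) (φ : ℕ → X) :
    IsParsevalFrame 𝕜 φ ↔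
      ∃ U : X →L[𝕜] X, (∀ f : X, ‖ContinuousLinearMap.adjoint U f‖ = ‖f‖) ∧
        ∀ n : ℕ, φ n = U (e n) := by
  refine ⟨IsParsevalFrame.exists_norm_adjoint_apply e, ?_⟩
  rintro ⟨U, hU, hφ⟩
  rw [funext hφ]
  exact isParsevalFrame_of_norm_adjoint_apply e U hU
end

section
/- Let X be a Hilbert space over 𝕜 (𝕜 = ℝ or ℂ) and let A, B : X → X be bounded surjective linear operators. Then the following are equivalent: (i) there exist bounded surjective linear operators T, S : X → X with A = T ∘ B and B = S ∘ A; (ii) there exists a bounded invertible linear operator (continuous linear equivalence) T : X → X with A = T ∘ B. -/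
/-!
If `A = T ∘ B` and `B = S ∘ A`, then `A` and `B` have the same kernel. By the open mapping
theorem a surjective operator between Banach spaces is a quotient map, so every operator whose
kernel contains `ker B` factors continuously through `B`. Factoring `A` through `B` and `B`
through `A` gives two operators that are inverse to each other, because `A` and `B` are onto.
-/

open Function

theorem LinearMap.exists_comp_eq_of_ker_le {R M N P : Type*} [Ring R]
    [AddCommGroup M] [Module R M] [AddCommGroup N] [Module R N] [AddCommGroup P] [Module R P]
    {B : M →ₗ[R] N} (hB : Surjective B) {A : M →ₗ[R] P} (hker : ker B ≤ ker A) :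
    ∃ T : N →ₗ[R] P, T ∘ₗ B = A :=
  ⟨(ker B).liftQ A hker ∘ₗ (B.quotKerEquivOfSurjective hB).symm.toLinearMap, by ext; simp⟩

section Banach

variable {𝕜 E F G : Type*} [NontriviallyNormedField 𝕜]
  [NormedAddCommGroup E] [NormedSpace 𝕜 E] [CompleteSpace E]
  [NormedAddCommGroup F] [NormedSpace 𝕜 F] [CompleteSpace F]
  [NormedAddCommGroup G] [NormedSpace 𝕜 G]

theorem ContinuousLinearMap.exists_comp_eq_of_ker_le {B : E →L[𝕜] F} (hB : Surjective B)
    {A : E →L[𝕜] G} (hker : B.ker ≤ A.ker) : ∃ T : F →L[𝕜] G, T.comp B = A := by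
  obtain ⟨T, hT⟩ := LinearMap.exists_comp_eq_of_ker_le hB hker
  have hcont : Continuous T := by
    have hTB : ⇑T ∘ ⇑B = ⇑A := congrArg DFunLike.coe hT
    rw [(B.isQuotientMap hB).continuous_iff, hTB]
    exact A.continuous
  exact ⟨⟨T, hcont⟩, ContinuousLinearMap.coe_injective hT⟩

theorem ContinuousLinearEquiv.exists_comp_eq_of_ker_eq [CompleteSpace G]
    {A : E →L[𝕜] G} {B : E →L[𝕜] F} (hA : Surjective A) (hB : Surjective B)
    (hker : A.ker = B.ker) : ∃ T : F ≃L[𝕜] G, A = (T : F →L[𝕜] G).comp B := by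
  obtain ⟨T, hT⟩ := ContinuousLinearMap.exists_comp_eq_of_ker_le hB hker.ge
  obtain ⟨S, hS⟩ := ContinuousLinearMap.exists_comp_eq_of_ker_le hA hker.le
  refine ⟨.equivOfInverse T S ?_ ?_, hT.symm⟩
  · intro y
    obtain ⟨x, rfl⟩ := hB y
    rw [← ContinuousLinearMap.comp_apply T, hT, ← ContinuousLinearMap.comp_apply, hS]
  · intro z
    obtain ⟨x, rfl⟩ := hA z
    rw [← ContinuousLinearMap.comp_apply S, hS, ← ContinuousLinearMap.comp_apply, hT]

end Banach

theorem stmt5 (𝕜 X : Type*) [RCLike 𝕜] [NormedAddCommGroup X]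
    [InnerProductSpace 𝕜 X] [CompleteSpace X]
    (A B : X →L[𝕜] X) (hA : Function.Surjective A) (hB : Function.Surjective B) :
    (∃ T S : X →L[𝕜] X, Function.Surjective T ∧ Function.Surjective S ∧
        A = T.comp B ∧ B = S.comp A) ↔
      ∃ T : X ≃L[𝕜] X, A = (T : X →L[𝕜] X).comp B := by
  constructor
  · rintro ⟨T, S, -, -, hAB, hBA⟩
    refine ContinuousLinearEquiv.exists_comp_eq_of_ker_eq hA hB (le_antisymm ?_ ?_)
    · rw [hBA]
      exact LinearMap.ker_le_ker_comp (A : X →ₗ[𝕜] X) (S : X →ₗ[𝕜] X)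
    · rw [hAB]
      exact LinearMap.ker_le_ker_comp (B : X →ₗ[𝕜] X) (T : X →ₗ[𝕜] X)
  · rintro ⟨T, hT⟩
    exact ⟨T, T.symm, T.surjective, T.symm.surjective, hT, by rw [hT]; ext; simp⟩
end

section
/- Let X be a Hilbert space over 𝕜 (𝕜 = ℝ or ℂ) and let A, B : X → X be bounded surjective linear operators. Then there exists a bounded surjective linear operator T : X → X with A = T ∘ B if and only if ker B ⊆ ker A. -/
open Function

/-- By the open mapping theorem a surjection between Banach spaces is a quotient map, so the
linear factorisation of `A` through `B` is automatically continuous. -/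
theorem ContinuousLinearMap.exists_eq_comp_of_ker_le {𝕜 E F G : Type*} [NontriviallyNormedField 𝕜]
    [NormedAddCommGroup E] [NormedSpace 𝕜 E] [CompleteSpace E]
    [NormedAddCommGroup F] [NormedSpace 𝕜 F] [CompleteSpace F]
    [NormedAddCommGroup G] [NormedSpace 𝕜 G]
    {A : E →L[𝕜] G} {B : E →L[𝕜] F} (hB : Surjective B)
    (hker : LinearMap.ker (B : E →ₗ[𝕜] F) ≤ LinearMap.ker (A : E →ₗ[𝕜] G)) :
    ∃ T : F →L[𝕜] G, A = T.comp B := by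
  let T : F →ₗ[𝕜] G := (LinearMap.ker (B : E →ₗ[𝕜] F)).liftQ A hker ∘ₗ
    ((B : E →ₗ[𝕜] F).quotKerEquivOfSurjective hB).symm.toLinearMap
  have hTB : T ∘ B = A := funext fun x => by
    have hmk : ((B : E →ₗ[𝕜] F).quotKerEquivOfSurjective hB).symm (B x) =
        Submodule.Quotient.mk x := (LinearEquiv.symm_apply_eq _).2 rfl
    simp [T, hmk]
  have hT : Continuous T := (B.isQuotientMap hB).continuous_iff.2 (hTB ▸ A.continuous)
  exact ⟨⟨T, hT⟩, ContinuousLinearMap.ext fun x => (congrFun hTB x).symm⟩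

theorem stmt6 (𝕜 X : Type*) [RCLike 𝕜] [NormedAddCommGroup X]
    [InnerProductSpace 𝕜 X] [CompleteSpace X]
    (A B : X →L[𝕜] X) (hA : Function.Surjective A) (hB : Function.Surjective B) :
    (∃ T : X →L[𝕜] X, Function.Surjective T ∧ A = T.comp B) ↔
      LinearMap.ker (B : X →ₗ[𝕜] X) ≤ LinearMap.ker (A : X →ₗ[𝕜] X) := by
  constructor
  · rintro ⟨T, -, rfl⟩
    exact LinearMap.ker_le_ker_comp (B : X →ₗ[𝕜] X) (T : X →ₗ[𝕜] X)
  · intro hker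
    obtain ⟨T, rfl⟩ := ContinuousLinearMap.exists_eq_comp_of_ker_le hB hker
    exact ⟨T, (T.coe_comp B ▸ hA).of_comp, rfl⟩
end

section
/- Let X be a Hilbert space over 𝕜 (𝕜 = ℝ or ℂ) and let A, B : X → X be bounded surjective linear operators such that ker B is finite-dimensional and rank(ker B) ≤ rank(ker A). Then there exists a bounded surjective linear operator T : X → X such that A = B ∘ T and rank(ker A) = rank(ker B) + rank(ker T) (cardinal addition); in particular, when rank(ker A) = k and rank(ker B) = ℓ with ℓ finite, rank(ker T) = k − ℓ. -/
/-!
Since `ker B` is finite-dimensional it is topologically complemented, so by the open mapping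
theorem `x ↦ (B x, P x)`, with `P` a continuous projection onto `ker B`, is an isomorphism
`e : X ≃L X × ker B`. Choose `F ≤ ker A` with `dim F = dim ker B` and a continuous
`Q : X → ker B` that is an isomorphism on `F` and vanishes on a complement of `F`. Then
`T = e⁻¹ ∘ (A, Q)` satisfies `B ∘ T = A`, is onto because `ker A + ker Q = X`, and
`ker T = ker A ⊓ ker Q` is a complement of `F` in `ker A`.
-/

open Module LinearMap

namespace Submodule

variable {K V : Type*} [DivisionRing K] [AddCommGroup V] [Module K V]

theorem exists_le_rank_eq {p : Submodule K V} {c : Cardinal} (h : c ≤ Module.rank K p) :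
    ∃ F ≤ p, Module.rank K F = c := by
  obtain ⟨s, rfl, hs⟩ := le_rank_iff_exists_linearIndependent.mp h
  refine ⟨(span K s).map p.subtype, map_subtype_le _ _, ?_⟩
  rw [← (equivMapOfInjective _ p.injective_subtype _).rank_eq, rank_span_set hs]

theorem rank_eq_rank_add_rank_inf_of_isCompl {F G M : Submodule K V} (hFM : F ≤ M)
    (hFG : IsCompl F G) :
    Module.rank K M = Module.rank K F + Module.rank K (M ⊓ G : Submodule K V) := by
  have hsup : F ⊔ M ⊓ G = M := by
    rw [inf_comm, ← sup_inf_assoc_of_le G hFM, hFG.sup_eq_top, top_inf_eq]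
  have hinf : F ⊓ (M ⊓ G) = ⊥ :=
    eq_bot_iff.mpr <| hFG.inf_eq_bot ▸ inf_le_inf_left F inf_le_right
  rw [← rank_sup_add_rank_inf_eq F (M ⊓ G), hsup, hinf, rank_bot, add_zero]

end Submodule

section Banach

variable {𝕜 E F : Type*} [RCLike 𝕜] [NormedAddCommGroup E] [NormedSpace 𝕜 E]
  [NormedAddCommGroup F] [NormedSpace 𝕜 F]

theorem exists_continuousLinearMap_range_eq_top_isCompl_ker {p : Submodule 𝕜 E}
    [FiniteDimensional 𝕜 p] [FiniteDimensional 𝕜 F] (h : finrank 𝕜 p = finrank 𝕜 F) :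
    ∃ Q : E →L[𝕜] F,
      range (Q : E →ₗ[𝕜] F) = ⊤ ∧ IsCompl p (ker (Q : E →ₗ[𝕜] F)) := by
  obtain ⟨P, hP⟩ := Submodule.ClosedComplemented.of_finiteDimensional p
  let φ : p ≃L[𝕜] F := (LinearEquiv.ofFinrankEq p F h).toContinuousLinearEquiv
  refine ⟨(φ : p →L[𝕜] F) ∘L P, ?_, ?_⟩
  · change range ((φ.toLinearEquiv : p →ₗ[𝕜] F) ∘ₗ (P : E →ₗ[𝕜] p)) = ⊤
    rw [range_comp_of_range_eq_top _ (range_eq_of_proj hP), LinearEquiv.range]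
  · change IsCompl p (ker ((φ.toLinearEquiv : p →ₗ[𝕜] F) ∘ₗ (P : E →ₗ[𝕜] p)))
    rw [LinearEquiv.ker_comp]
    exact isCompl_of_proj hP

theorem ContinuousLinearMap.exists_equiv_prod_ker [CompleteSpace E] [CompleteSpace F]
    (B : E →L[𝕜] F) (hB : Function.Surjective B)
    (hK : (ker (B : E →ₗ[𝕜] F)).ClosedComplemented) :
    ∃ e : E ≃L[𝕜] F × ker (B : E →ₗ[𝕜] F), ∀ x, (e x).1 = B x := by
  have := hK.isClosed.completeSpace_coe
  obtain ⟨P, hP⟩ := hK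
  exact ⟨B.equivProdOfSurjectiveOfIsCompl P (range_eq_top.mpr hB) (range_eq_of_proj hP)
    (isCompl_of_proj hP), fun _ => rfl⟩

end Banach

theorem stmt8 (𝕜 X : Type*) [RCLike 𝕜] [NormedAddCommGroup X]
    [InnerProductSpace 𝕜 X] [CompleteSpace X]
    (A B : X →L[𝕜] X) (hA : Function.Surjective A) (hB : Function.Surjective B)
    (hfin : FiniteDimensional 𝕜 (LinearMap.ker (B : X →ₗ[𝕜] X)))
    (hle : Module.rank 𝕜 (LinearMap.ker (B : X →ₗ[𝕜] X)) ≤ Module.rank 𝕜 (LinearMap.ker (A : X →ₗ[𝕜] X))) :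
    ∃ T : X →L[𝕜] X, Function.Surjective T ∧ A = B.comp T ∧
      Module.rank 𝕜 (LinearMap.ker (A : X →ₗ[𝕜] X)) =
        Module.rank 𝕜 (LinearMap.ker (B : X →ₗ[𝕜] X)) + Module.rank 𝕜 (LinearMap.ker (T : X →ₗ[𝕜] X)) := by
  set K := ker (B : X →ₗ[𝕜] X)
  obtain ⟨F, hFA, hFK⟩ := Submodule.exists_le_rank_eq hle
  have : FiniteDimensional 𝕜 F := rank_lt_aleph0_iff.mp (hFK ▸ rank_lt_aleph0 𝕜 K)
  obtain ⟨Q, hQ, hFQ⟩ :=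
    exists_continuousLinearMap_range_eq_top_isCompl_ker (F := K)
      (congrArg Cardinal.toNat hFK)
  obtain ⟨e, he⟩ := B.exists_equiv_prod_ker hB (.of_finiteDimensional K)
  have hAQ : ker (A : X →ₗ[𝕜] X) ⊔ ker (Q : X →ₗ[𝕜] K) = ⊤ :=
    top_le_iff.mp (hFQ.sup_eq_top ▸ sup_le_sup_right hFA _)
  let T : X →L[𝕜] X := (e.symm : X × K →L[𝕜] X) ∘L A.prod Q
  have hker : ker (T : X →ₗ[𝕜] X) = ker (A : X →ₗ[𝕜] X) ⊓ ker (Q : X →ₗ[𝕜] K) := by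
    ext x
    simp [T]
  refine ⟨T, ?_, ?_, ?_⟩
  · refine e.symm.surjective.comp (range_eq_top.mp ?_)
    rw [ContinuousLinearMap.coe_prod, range_prod_eq hAQ, range_eq_top.mpr hA, hQ,
      Submodule.prod_top]
  · ext x
    simp [T, ← he]
  · rw [hker, ← hFK]
    exact Submodule.rank_eq_rank_add_rank_inf_of_isCompl hFA hFQ
end

section
/- Let V₁, V₂ be invertible real n×n matrices (whose columns thus form bases of ℝⁿ). Then the complex matrix V₁ + i·V₂ (obtained by mapping the real entries into ℂ) is invertible in GL(n, ℂ) — i.e. its columns form a basis of ℂⁿ — if and only if i is not an eigenvalue of the real matrix A := V₂ · V₁⁻¹, i.e. the complex number i is not a root of the characteristic polynomial of A (equivalently i ∉ spectrum ℂ of the complexification of A). -/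
theorem stmt10 (n : ℕ) (V₁ V₂ : Matrix (Fin n) (Fin n) ℝ)
    (h₁ : IsUnit V₁) (h₂ : IsUnit V₂) :
    IsUnit (V₁.map (algebraMap ℝ ℂ) + Complex.I • V₂.map (algebraMap ℝ ℂ)) ↔
      Complex.I ∉ spectrum ℂ ((V₂ * V₁⁻¹).map (algebraMap ℝ ℂ)) := by
  set f := (algebraMap ℝ ℂ).mapMatrix (m := Fin n)
  have hmap : ∀ M : Matrix (Fin n) (Fin n) ℝ, M.map (algebraMap ℝ ℂ) = f M := fun _ => rfl
  set A := V₂ * V₁⁻¹ with hA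
  have hV₂ : V₂ = A * V₁ := by
    rw [hA, Matrix.mul_assoc,
      Matrix.nonsing_inv_mul _ ((Matrix.isUnit_iff_isUnit_det _).mp h₁), Matrix.mul_one]
  have hU : IsUnit (f V₁) := h₁.map f
  have key : V₁.map (algebraMap ℝ ℂ) + Complex.I • V₂.map (algebraMap ℝ ℂ)
      = (1 + Complex.I • f A) * f V₁ := by
    rw [hmap, hmap, hV₂, map_mul, add_mul, one_mul, Matrix.smul_mul]
  rw [key, spectrum.notMem_iff]
  obtain ⟨u, hu⟩ := hU
  rw [← hu, Units.isUnit_mul_units]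
  have h2 : algebraMap ℂ (Matrix (Fin n) (Fin n) ℂ) Complex.I - f A
      = Complex.I • (1 + Complex.I • f A) := by
    rw [smul_add, smul_smul, Complex.I_mul_I, Algebra.algebraMap_eq_smul_one, neg_one_smul,
      sub_eq_add_neg]
  have hIunit : IsUnit ((Matrix.scalar (Fin n)) Complex.I) :=
    (Complex.I_ne_zero.isUnit).map (Matrix.scalar (Fin n))
  obtain ⟨v, hv⟩ := hIunit
  have h3 : ∀ M : Matrix (Fin n) (Fin n) ℂ, Complex.I • M = (v : Matrix (Fin n) (Fin n) ℂ) * M := by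
    intro M
    rw [hv, Matrix.scalar_commute _ (fun r => Commute.all _ r) M]
    exact (Matrix.smul_eq_mul_diagonal M Complex.I).trans (by rw [← hv]; rw [hv]; rfl)
  rw [hmap, h2, h3 (1 + Complex.I • f A), Units.isUnit_units_mul]
end

section
/- Let E₁, E₂ be real orthogonal n×n matrices (E₁ᵀE₁ = E₂ᵀE₂ = Id), so that their columns form orthonormal bases of ℝⁿ. Then the complex matrix (1/√2)·(E₁ + i·E₂) is unitary — i.e. its columns form an orthonormal basis of ℂⁿ — if and only if the real matrix A := E₂ · E₁ᵀ is symmetric (Aᵀ = A). -/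
open Matrix

theorem stmt11 (n : ℕ) (E₁ E₂ : Matrix (Fin n) (Fin n) ℝ)
    (h₁ : E₁ᵀ * E₁ = 1) (h₂ : E₂ᵀ * E₂ = 1) :
    ((Real.sqrt 2 : ℂ))⁻¹ •
        (E₁.map (algebraMap ℝ ℂ) + Complex.I • E₂.map (algebraMap ℝ ℂ)) ∈
        Matrix.unitaryGroup (Fin n) ℂ ↔
      (E₂ * E₁ᵀ)ᵀ = E₂ * E₁ᵀ := by
  have h₁' : E₁ * E₁ᵀ = 1 := mul_eq_one_comm.mp h₁
  have h₂' : E₂ * E₂ᵀ = 1 := mul_eq_one_comm.mp h₂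
  set f : ℝ →+* ℂ := algebraMap ℝ ℂ with hfdef
  have hstar : Function.Semiconj (f : ℝ → ℂ) star star := by
    intro x
    simp [hfdef, Complex.conj_ofReal]
  set A := E₁.map f with hA
  set B := E₂.map f with hB
  have hAH : Aᴴ = E₁ᵀ.map f := by
    rw [hA, ← Matrix.conjTranspose_map (f : ℝ → ℂ) hstar]
    congr 1
  have hBH : Bᴴ = E₂ᵀ.map f := by
    rw [hB, ← Matrix.conjTranspose_map (f : ℝ → ℂ) hstar]
    congr 1
  have hAAH : A * Aᴴ = 1 := by
    rw [hAH, hA, ← Matrix.map_mul, h₁', Matrix.map_one f (map_zero f) (map_one f)]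
  have hBBH : B * Bᴴ = 1 := by
    rw [hBH, hB, ← Matrix.map_mul, h₂', Matrix.map_one f (map_zero f) (map_one f)]
  set c : ℂ := ((Real.sqrt 2 : ℂ))⁻¹ with hc
  have hcc : c * star c = (2 : ℂ)⁻¹ := by
    rw [hc]
    rw [star_inv₀]
    rw [← mul_inv]
    congr 1
    rw [show star ((Real.sqrt 2 : ℝ) : ℂ) = ((Real.sqrt 2 : ℝ) : ℂ) from
      Complex.conj_ofReal _]
    rw [← Complex.ofReal_mul, Real.mul_self_sqrt (by norm_num)]
    norm_num
  have key : (c • (A + Complex.I • B)) * star (c • (A + Complex.I • B)) =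
      1 + ((2 : ℂ)⁻¹ * Complex.I) • ((E₂ * E₁ᵀ - E₁ * E₂ᵀ).map f) := by
    have hstarM : star (c • (A + Complex.I • B)) =
        star c • (Aᴴ + (-Complex.I) • Bᴴ) := by
      simp [Matrix.star_eq_conjTranspose, smul_smul, Complex.conj_I]
    rw [hstarM]
    rw [Matrix.smul_mul, Matrix.mul_smul, smul_smul, hcc]
    rw [Matrix.add_mul, Matrix.mul_add, Matrix.mul_add]
    rw [Matrix.smul_mul, Matrix.mul_smul, Matrix.mul_smul, Matrix.smul_mul]
    rw [hAAH, hBBH]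
    rw [smul_smul]
    have : -Complex.I * Complex.I = 1 := by
      simp [Complex.I_mul_I]
    rw [this, one_smul]
    have hBA : B * Aᴴ = (E₂ * E₁ᵀ).map f := by
      rw [hAH, hB, ← Matrix.map_mul]
    have hAB : A * Bᴴ = (E₁ * E₂ᵀ).map f := by
      rw [hBH, hA, ← Matrix.map_mul]
    rw [hBA, hAB]
    rw [Matrix.map_sub _ (map_sub f)]
    module
  rw [Matrix.mem_unitaryGroup_iff, key]
  constructor
  · intro h
    have h0 : ((2 : ℂ)⁻¹ * Complex.I) • ((E₂ * E₁ᵀ - E₁ * E₂ᵀ).map f) = 0 := by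
      rwa [add_eq_left] at h
    have hM : (E₂ * E₁ᵀ - E₁ * E₂ᵀ).map f = 0 := by
      rcases smul_eq_zero.mp h0 with hs | hM
      · exfalso
        apply Complex.I_ne_zero
        have h2 : ((2 : ℂ)⁻¹ : ℂ) ≠ 0 := by norm_num
        exact (mul_eq_zero.mp hs).resolve_left h2
      · exact hM
    have hM0 : E₂ * E₁ᵀ - E₁ * E₂ᵀ = 0 := by
      ext i j
      have := congrFun (congrFun hM i) j
      simpa [hfdef, Matrix.map_apply, ← Complex.ofReal_sub, Complex.ofReal_eq_zero] using this
    have heq : E₂ * E₁ᵀ = E₁ * E₂ᵀ := sub_eq_zero.mp hM0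
    rw [Matrix.transpose_mul, Matrix.transpose_transpose, ← heq]
  · intro h
    have h0 : E₂ * E₁ᵀ - E₁ * E₂ᵀ = 0 := by
      have : (E₂ * E₁ᵀ)ᵀ = E₁ * E₂ᵀ := by
        rw [Matrix.transpose_mul, Matrix.transpose_transpose]
      rw [← h, this]
      simp
    rw [h0]
    simp
end

section
/- Let n ≥ 1 and let A = (a_{ℓ,m}) be a real n×n matrix. Suppose λ₀ ∈ ℂ is an eigenvalue of the complexification of A·P_π for every permutation π of {1,…,n}, where P_π is the permutation matrix of π (so A·P_π permutes the columns of A by π). Then λ₀ ∈ {0, (1/n)·∑_{ℓ=1}^n ∑_{m=1}^n a_{ℓ,m}}. -/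
open Finset Equiv Matrix

private lemma sum_perm_apply {m : ℕ} (f : Fin (m+1) → ℂ) (i : Fin (m+1)) :
    ∑ π : Equiv.Perm (Fin (m+1)), f (π i) = (Nat.factorial m : ℂ) * ∑ j, f j := by
  have h1 : ∑ π : Equiv.Perm (Fin (m+1)), f (π i)
      = ∑ π : Equiv.Perm (Fin (m+1)), f (π 0) := by
    rw [← Equiv.sum_comp (Equiv.mulRight (Equiv.swap i 0)) (fun π => f (π 0))]
    simp [Equiv.Perm.mul_apply]
  rw [h1, ← Equiv.sum_comp (Equiv.Perm.decomposeFin (n := m)).symm (fun π => f (π 0))]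
  rw [Fintype.sum_prod_type]
  simp [Equiv.Perm.decomposeFin_symm_apply_zero, Finset.sum_const, Fintype.card_perm,
    Fintype.card_fin, mul_comm, Finset.mul_sum]

private lemma cancel {m : ℕ} (l : ℂ) (c : Fin (m+1) → Fin (m+1) → ℂ)
    (t : Finset (Fin (m+1))) (i0 j0 : Fin (m+1)) (hi : i0 ∉ t) (hj : j0 ∉ t) (hij : i0 ≠ j0) :
    ∑ σ : Equiv.Perm (Fin (m+1)), ((Equiv.Perm.sign σ : ℤ) : ℂ) *
      ((∏ i ∈ t, if σ i = i then l else 0) *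
        ∑ π : Equiv.Perm (Fin (m+1)), ∏ i ∈ tᶜ, c (σ i) (π i)) = 0 := by
  have hmem : ∀ i ∈ tᶜ, Equiv.swap i0 j0 i ∈ tᶜ := by
    intro i hit
    rcases eq_or_ne i i0 with rfl | h1
    · simpa [Equiv.swap_apply_left] using Finset.mem_compl.2 hj
    rcases eq_or_ne i j0 with rfl | h2
    · simpa [Equiv.swap_apply_right] using Finset.mem_compl.2 hi
    · rwa [Equiv.swap_apply_of_ne_of_ne h1 h2]
  apply Finset.sum_ninvolution (g := fun σ => σ * Equiv.swap i0 j0)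
  · intro σ
    have hsign : ((Equiv.Perm.sign (σ * Equiv.swap i0 j0) : ℤ) : ℂ)
        = -((Equiv.Perm.sign σ : ℤ) : ℂ) := by
      simp [Equiv.Perm.sign_mul, Equiv.Perm.sign_swap hij]
    have hprod : (∏ i ∈ t, if (σ * Equiv.swap i0 j0) i = i then l else 0)
        = ∏ i ∈ t, if σ i = i then l else 0 := by
      refine Finset.prod_congr rfl fun i hit => ?_
      have : Equiv.swap i0 j0 i = i :=
        Equiv.swap_apply_of_ne_of_ne (by rintro rfl; exact hi hit) (by rintro rfl; exact hj hit)
      simp [Equiv.Perm.mul_apply, this]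
    have hsum : (∑ π : Equiv.Perm (Fin (m+1)), ∏ i ∈ tᶜ, c ((σ * Equiv.swap i0 j0) i) (π i))
        = ∑ π : Equiv.Perm (Fin (m+1)), ∏ i ∈ tᶜ, c (σ i) (π i) := by
      rw [← Equiv.sum_comp (Equiv.mulRight (Equiv.swap i0 j0))
        (fun π => ∏ i ∈ tᶜ, c (σ i) (π i))]
      refine Finset.sum_congr rfl fun π _ => ?_
      refine Finset.prod_bij' (fun i _ => Equiv.swap i0 j0 i) (fun i _ => Equiv.swap i0 j0 i)
        (fun i hi => hmem i hi) (fun i hi => hmem i hi) ?_ ?_ ?_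
      · intro i _; simp
      · intro i _; simp
      · intro i _
        simp [Equiv.Perm.mul_apply, Equiv.coe_mulRight]
    rw [hsign, hprod, hsum]; ring
  · intro σ _
    intro hcon
    have := congrArg (fun τ : Equiv.Perm (Fin (m+1)) => τ i0) hcon
    simp only [Equiv.Perm.mul_apply, Equiv.swap_apply_left] at this
    exact hij (σ.injective this).symm
  · intro σ; exact Finset.mem_univ _
  · intro σ
    rw [mul_assoc, Equiv.swap_mul_self, mul_one]

private lemma only_id {m : ℕ} (l : ℂ) (t : Finset (Fin (m+1)))
    (hfix : ∀ σ : Equiv.Perm (Fin (m+1)), (∀ i ∈ t, σ i = i) → σ = 1)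
    (C : Equiv.Perm (Fin (m+1)) → ℂ) :
    ∑ σ : Equiv.Perm (Fin (m+1)), ((Equiv.Perm.sign σ : ℤ) : ℂ) *
      ((∏ i ∈ t, if σ i = i then l else 0) * C σ) = l ^ t.card * C 1 := by
  rw [Finset.sum_eq_single 1]
  · simp [Equiv.Perm.one_apply, Finset.prod_const]
  · intro σ _ hσ
    obtain ⟨i, hit, hne⟩ : ∃ i ∈ t, σ i ≠ i := by
      by_contra hcon
      push_neg at hcon
      exact hσ (hfix σ hcon)
    rw [Finset.prod_eq_zero hit (by simp [hne])]
    ring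
  · simp

private lemma key {m : ℕ} (B : Matrix (Fin (m+1)) (Fin (m+1)) ℂ) (l : ℂ)
    (H : ∀ π : Equiv.Perm (Fin (m+1)),
      (l • (1 : Matrix (Fin (m+1)) (Fin (m+1)) ℂ) - B.submatrix id ⇑π).det = 0) :
    (Nat.factorial (m+1) : ℂ) * l ^ (m+1)
      = (Nat.factorial m : ℂ) * l ^ m * ∑ i, ∑ j, B i j := by
  have h0 : (0 : ℂ) = ∑ t ∈ (Finset.univ : Finset (Fin (m+1))).powerset,
      ∑ σ : Equiv.Perm (Fin (m+1)), ((Equiv.Perm.sign σ : ℤ) : ℂ) *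
        ((∏ i ∈ t, if σ i = i then l else 0) *
          ∑ π : Equiv.Perm (Fin (m+1)), ∏ i ∈ tᶜ, -B (σ i) (π i)) := by
    have e1 : (0 : ℂ) = ∑ π : Equiv.Perm (Fin (m+1)),
        (l • (1 : Matrix (Fin (m+1)) (Fin (m+1)) ℂ) - B.submatrix id ⇑π).det := by
      simp [H]
    refine e1.trans ?_
    have e2 : ∀ π : Equiv.Perm (Fin (m+1)),
        (l • (1 : Matrix (Fin (m+1)) (Fin (m+1)) ℂ) - B.submatrix id ⇑π).det
        = ∑ σ : Equiv.Perm (Fin (m+1)), ((Equiv.Perm.sign σ : ℤ) : ℂ) *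
          ∑ t ∈ (Finset.univ : Finset (Fin (m+1))).powerset,
            (∏ i ∈ t, if σ i = i then l else 0) * ∏ i ∈ tᶜ, -B (σ i) (π i) := by
      intro π
      rw [Matrix.det_apply']
      refine Finset.sum_congr rfl fun σ _ => ?_
      congr 1
      have entry : ∀ i, (l • (1 : Matrix (Fin (m+1)) (Fin (m+1)) ℂ) - B.submatrix id ⇑π) (σ i) i
          = (if σ i = i then l else 0) + -B (σ i) (π i) := by
        intro i
        simp [Matrix.sub_apply, Matrix.smul_apply, Matrix.one_apply, Matrix.submatrix_apply,
          sub_eq_add_neg, mul_ite, apply_ite]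
      rw [Finset.prod_congr rfl fun i _ => entry i, Finset.prod_add]
      refine Finset.sum_congr rfl fun t _ => ?_
      rw [Finset.compl_eq_univ_sdiff]
    refine (Finset.sum_congr rfl fun π _ => e2 π).trans ?_
    calc ∑ π : Equiv.Perm (Fin (m+1)), ∑ σ : Equiv.Perm (Fin (m+1)),
          ((Equiv.Perm.sign σ : ℤ) : ℂ) *
          ∑ t ∈ (Finset.univ : Finset (Fin (m+1))).powerset,
            (∏ i ∈ t, if σ i = i then l else 0) * ∏ i ∈ tᶜ, -B (σ i) (π i)
        = ∑ π : Equiv.Perm (Fin (m+1)), ∑ σ : Equiv.Perm (Fin (m+1)),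
          ∑ t ∈ (Finset.univ : Finset (Fin (m+1))).powerset,
            ((Equiv.Perm.sign σ : ℤ) : ℂ) *
            ((∏ i ∈ t, if σ i = i then l else 0) * ∏ i ∈ tᶜ, -B (σ i) (π i)) := by
          refine Finset.sum_congr rfl fun π _ => Finset.sum_congr rfl fun σ _ => ?_
          rw [Finset.mul_sum]
      _ = ∑ t ∈ (Finset.univ : Finset (Fin (m+1))).powerset,
          ∑ π : Equiv.Perm (Fin (m+1)), ∑ σ : Equiv.Perm (Fin (m+1)),
            ((Equiv.Perm.sign σ : ℤ) : ℂ) *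
            ((∏ i ∈ t, if σ i = i then l else 0) * ∏ i ∈ tᶜ, -B (σ i) (π i)) :=
          (Finset.sum_congr rfl fun π _ => Finset.sum_comm).trans Finset.sum_comm
      _ = ∑ t ∈ (Finset.univ : Finset (Fin (m+1))).powerset,
          ∑ σ : Equiv.Perm (Fin (m+1)), ((Equiv.Perm.sign σ : ℤ) : ℂ) *
            ((∏ i ∈ t, if σ i = i then l else 0) *
              ∑ π : Equiv.Perm (Fin (m+1)), ∏ i ∈ tᶜ, -B (σ i) (π i)) := by
          refine Finset.sum_congr rfl fun t _ => Finset.sum_comm.trans ?_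
          refine Finset.sum_congr rfl fun σ _ => ?_
          rw [Finset.mul_sum, Finset.mul_sum]
  set F : Finset (Fin (m+1)) → ℂ := fun t =>
    ∑ σ : Equiv.Perm (Fin (m+1)), ((Equiv.Perm.sign σ : ℤ) : ℂ) *
      ((∏ i ∈ t, if σ i = i then l else 0) *
        ∑ π : Equiv.Perm (Fin (m+1)), ∏ i ∈ tᶜ, -B (σ i) (π i)) with hF
  set S : Finset (Finset (Fin (m+1))) :=
    insert Finset.univ ((Finset.univ : Finset (Fin (m+1))).image
      (fun i => Finset.univ.erase i)) with hS
  have hvanish : ∀ t ∈ (Finset.univ : Finset (Fin (m+1))).powerset, t ∉ S → F t = 0 := by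
    intro t _ htS
    have ht1 : t ≠ Finset.univ := by rintro rfl; exact htS (Finset.mem_insert_self _ _)
    obtain ⟨i0, hi0⟩ : ∃ i0, i0 ∉ t := by
      by_contra hcon; push_neg at hcon
      exact ht1 (Finset.eq_univ_iff_forall.2 hcon)
    obtain ⟨j0, hj0, hij⟩ : ∃ j0, j0 ∉ t ∧ j0 ≠ i0 := by
      by_contra hcon; push_neg at hcon
      have : t = Finset.univ.erase i0 := by
        ext x
        simp only [Finset.mem_erase, Finset.mem_univ, and_true]
        constructor
        · rintro hx rfl; exact hi0 hx
        · intro hx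
          by_contra hxt
          exact hx (hcon x hxt)
      exact htS (by
        rw [hS, this]
        exact Finset.mem_insert_of_mem (Finset.mem_image_of_mem _ (Finset.mem_univ i0)))
    exact cancel l (fun a b => -B a b) t i0 j0 hi0 hj0 hij.symm
  have h1 : (0 : ℂ) = ∑ t ∈ S, F t := by
    rw [h0]
    exact (Finset.sum_subset (by intro t _; simp [Finset.mem_powerset]) hvanish).symm
  have hnotmem : Finset.univ ∉ (Finset.univ : Finset (Fin (m+1))).image
      (fun i => Finset.univ.erase i) := by
    intro hmem
    obtain ⟨i, _, hi⟩ := Finset.mem_image.1 hmem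
    have : i ∈ Finset.univ.erase i := by rw [hi]; exact Finset.mem_univ i
    exact (Finset.mem_erase.1 this).1 rfl
  have h2 : (0 : ℂ) = F Finset.univ + ∑ i0, F (Finset.univ.erase i0) := by
    rw [h1, hS, Finset.sum_insert hnotmem, Finset.sum_image]
    intro i _ j _ hij
    by_contra hne
    have hij' : Finset.univ.erase i = Finset.univ.erase j := hij
    have hmem1 : i ∈ Finset.univ.erase j := Finset.mem_erase.2 ⟨hne, Finset.mem_univ i⟩
    have hmem2 : i ∉ Finset.univ.erase i := fun hc => (Finset.mem_erase.1 hc).1 rfl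
    rw [hij'] at hmem2
    exact hmem2 hmem1
  have hFuniv : F Finset.univ = (Nat.factorial (m+1) : ℂ) * l ^ (m+1) := by
    have : F Finset.univ = ∑ σ : Equiv.Perm (Fin (m+1)), ((Equiv.Perm.sign σ : ℤ) : ℂ) *
        ((∏ i ∈ Finset.univ, if σ i = i then l else 0) *
          (fun _ : Equiv.Perm (Fin (m+1)) => ((Nat.factorial (m+1) : ℂ))) σ) := by
      rw [hF]
      refine Finset.sum_congr rfl fun σ _ => ?_
      simp [Finset.compl_univ, Finset.sum_const, Fintype.card_perm]
    rw [this, only_id l Finset.univ (fun σ hσ => Equiv.ext fun i => hσ i (Finset.mem_univ i))]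
    simp [Finset.card_univ, mul_comm]
  have hFerase : ∀ i0, F (Finset.univ.erase i0)
      = l ^ m * (-((Nat.factorial m : ℂ) * ∑ j, B i0 j)) := by
    intro i0
    have hcompl : (Finset.univ.erase i0)ᶜ = {i0} := by
      rw [Finset.compl_erase, Finset.compl_univ]
      simp
    have hfix : ∀ σ : Equiv.Perm (Fin (m+1)),
        (∀ i ∈ Finset.univ.erase i0, σ i = i) → σ = 1 := by
      intro σ hσ
      have hfix0 : σ i0 = i0 := by
        by_contra hne
        have h1 : σ (σ i0) = σ i0 :=
          hσ (σ i0) (Finset.mem_erase.2 ⟨hne, Finset.mem_univ _⟩)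
        exact hne (σ.injective h1)
      refine Equiv.ext fun i => ?_
      rcases eq_or_ne i i0 with rfl | hne
      · simpa using hfix0
      · simpa using hσ i (Finset.mem_erase.2 ⟨hne, Finset.mem_univ _⟩)
    have : F (Finset.univ.erase i0) = ∑ σ : Equiv.Perm (Fin (m+1)),
        ((Equiv.Perm.sign σ : ℤ) : ℂ) *
        ((∏ i ∈ Finset.univ.erase i0, if σ i = i then l else 0) *
          (fun τ : Equiv.Perm (Fin (m+1)) =>
            ∑ π : Equiv.Perm (Fin (m+1)), -B (τ i0) (π i0)) σ) := by
      rw [hF]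
      refine Finset.sum_congr rfl fun σ _ => ?_
      rw [hcompl]
      simp
    rw [this, only_id l (Finset.univ.erase i0) hfix]
    have hcard : (Finset.univ.erase i0).card = m := by
      rw [Finset.card_erase_of_mem (Finset.mem_univ i0), Finset.card_univ, Fintype.card_fin]
      omega
    rw [hcard]
    congr 1
    have e6 : ∑ π : Equiv.Perm (Fin (m+1)), -B i0 (π i0)
        = (Nat.factorial m : ℂ) * ∑ j, -B i0 j := sum_perm_apply (fun j => -B i0 j) i0
    simp only [Equiv.Perm.one_apply]
    rw [e6, Finset.sum_neg_distrib]
    ring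
  rw [hFuniv] at h2
  rw [Finset.sum_congr rfl (fun i0 _ => hFerase i0)] at h2
  have e5 : ∑ i0, l ^ m * (-((Nat.factorial m : ℂ) * ∑ j, B i0 j))
      = -((Nat.factorial m : ℂ) * l ^ m * ∑ i0, ∑ j, B i0 j) := by
    rw [Finset.mul_sum, ← Finset.sum_neg_distrib]
    refine Finset.sum_congr rfl fun i0 _ => ?_
    ring
  rw [e5] at h2
  linear_combination -h2


private lemma det_eq_zero_of_isRoot {k : ℕ} (M : Matrix (Fin k) (Fin k) ℂ) (l : ℂ)
    (h : M.charpoly.IsRoot l) : (l • (1 : Matrix (Fin k) (Fin k) ℂ) - M).det = 0 := by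
  have h1 : Polynomial.eval l M.charpoly = 0 := h
  rw [Matrix.charpoly] at h1
  rw [show Polynomial.eval l (Matrix.charmatrix M).det
      = ((Matrix.charmatrix M).map (Polynomial.evalRingHom l)).det from
    (Polynomial.evalRingHom l).map_det _] at h1
  have h2 : (Matrix.charmatrix M).map (Polynomial.evalRingHom l)
      = l • (1 : Matrix (Fin k) (Fin k) ℂ) - M := by
    ext i j
    by_cases hij : i = j
    · subst hij
      simp [Matrix.charmatrix_apply_eq, Matrix.one_apply]
    · simp [Matrix.charmatrix_apply_ne _ _ _ hij, Matrix.one_apply_ne hij]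
  rwa [h2] at h1

private lemma map_permMatrix {k : ℕ} (π : Equiv.Perm (Fin k)) :
    (π.permMatrix ℝ).map (algebraMap ℝ ℂ) = π.permMatrix ℂ := by
  ext i j
  simp [Equiv.Perm.permMatrix, PEquiv.toMatrix_apply, apply_ite]

theorem stmt12 (n : ℕ) (hn : 1 ≤ n) (A : Matrix (Fin n) (Fin n) ℝ) (l : ℂ)
    (h : ∀ π : Equiv.Perm (Fin n),
      (((A * π.permMatrix ℝ).map (algebraMap ℝ ℂ)).charpoly).IsRoot l) :
    l = 0 ∨ l = (n : ℂ)⁻¹ * ∑ i : Fin n, ∑ j : Fin n, (A i j : ℂ) := by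
  cases n with
  | zero => exact absurd hn (by omega)
  | succ m =>
    set B := A.map (algebraMap ℝ ℂ) with hB
    have H : ∀ π : Equiv.Perm (Fin (m+1)),
        (l • (1 : Matrix (Fin (m+1)) (Fin (m+1)) ℂ) - B.submatrix id ⇑π).det = 0 := by
      intro π
      have h1 := det_eq_zero_of_isRoot _ l (h π⁻¹)
      have h2 : ((A * (π⁻¹).permMatrix ℝ).map (algebraMap ℝ ℂ)) = B.submatrix id ⇑π := by
        rw [Matrix.map_mul, map_permMatrix]
        rw [show (π⁻¹ : Equiv.Perm (Fin (m+1))).permMatrix ℂ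
            = (π⁻¹ : Equiv.Perm (Fin (m+1))).toPEquiv.toMatrix from rfl]
        rw [PEquiv.mul_toMatrix_toPEquiv]
        congr
      rwa [h2] at h1
    have hkey := key B l H
    have hs : ∑ i, ∑ j, B i j = ∑ i : Fin (m+1), ∑ j, (A i j : ℂ) := by
      simp [hB, Matrix.map_apply]
    rw [hs] at hkey
    by_cases hl : l = 0
    · exact Or.inl hl
    right
    have hfac : ((Nat.factorial m : ℂ)) ≠ 0 := Nat.cast_ne_zero.2 m.factorial_ne_zero
    have hpow : l ^ m ≠ 0 := pow_ne_zero _ hl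
    have hcancel : ((m+1 : ℕ) : ℂ) * l = ∑ i : Fin (m+1), ∑ j, (A i j : ℂ) := by
      have e : (Nat.factorial m : ℂ) * l ^ m * (((m+1 : ℕ) : ℂ) * l)
          = (Nat.factorial m : ℂ) * l ^ m * ∑ i : Fin (m+1), ∑ j, (A i j : ℂ) := by
        rw [← hkey]
        push_cast [Nat.factorial_succ]
        ring
      exact mul_left_cancel₀ (mul_ne_zero hfac hpow) e
    have hne : ((m+1 : ℕ) : ℂ) ≠ 0 := Nat.cast_ne_zero.2 (Nat.succ_ne_zero m)
    rw [← hcancel, ← mul_assoc]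
    push_cast
    rw [inv_mul_cancel₀ (by push_cast at hne; exact hne), one_mul]
end

section
/- Let n ≥ 1 and let A be a real n×n matrix. Then there exists a permutation π of {1,…,n} such that i (the imaginary unit) is not an eigenvalue of the complexification of A·P_π, i.e. i is not a root of the characteristic polynomial over ℂ of A·P_π. (In particular this applies when i is an eigenvalue of A itself, yielding a column permutation removing the eigenvalue i.) -/
/-!
Summing the characteristic polynomials of `A * P_σ` over all permutations `σ` kills every
coefficient below `X ^ (n - 1)`: the sum is `n! X ^ n - s X ^ (n - 1)` with `s` real. At `X = i`
this is `i ^ (n - 1) (n! i - s)`, and the imaginary part of `n! i - s` is `n! ≠ 0`, so not all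
the summands can vanish at `i`.
-/

open Finset Equiv Matrix Polynomial

namespace Matrix

variable {ι R : Type*} [Fintype ι] [DecidableEq ι] [CommRing R]

/-- In the Leibniz expansion `∑ τ, sign τ • ∏ i, charmatrix (B * P_σ) i (τ i)`, the summand
depends on `σ` only through `μ = σ⁻¹ * τ`; reindexing by `μ` turns it into the corresponding
summand for the rank-one matrix `vecMulVec (fun i => B i (μ i)) 1`. -/
theorem sum_charpoly_mul_permMatrix_eq_sum_charpoly_vecMulVec (B : Matrix ι ι R) :
    ∑ σ : Perm ι, (B * σ.permMatrix R).charpoly =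
      ∑ σ : Perm ι, (vecMulVec (fun i => B i (σ i)) 1).charpoly := by
  simp only [charpoly, ← det_transpose (charmatrix _), det_apply, transpose_apply,
    charmatrix_apply]
  rw [sum_comm]
  conv_rhs => rw [sum_comm]
  refine sum_congr rfl fun τ _ =>
    Fintype.sum_equiv ((Equiv.inv _).trans (Equiv.mulRight τ)) _ _ fun σ => ?_
  simp [Perm.permMatrix, PEquiv.mul_toMatrix_toPEquiv, vecMulVec_apply]

theorem sum_charpoly_mul_permMatrix (B : Matrix ι ι R) :
    ∑ σ : Perm ι, (B * σ.permMatrix R).charpoly =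
      ∑ σ : Perm ι, (X ^ Fintype.card ι - (∑ i, B i (σ i)) • X ^ (Fintype.card ι - 1)) := by
  rw [sum_charpoly_mul_permMatrix_eq_sum_charpoly_vecMulVec]
  simp only [charpoly_vecMulVec, dotProduct_one]

end Matrix

theorem stmt13 (n : ℕ) (hn : 1 ≤ n) (A : Matrix (Fin n) (Fin n) ℝ) :
    ∃ π : Equiv.Perm (Fin n),
      ¬ (((A * π.permMatrix ℝ).map (algebraMap ℝ ℂ)).charpoly).IsRoot Complex.I := by
  by_contra! h
  have hsum : aeval Complex.I (∑ σ : Perm (Fin n), (A * σ.permMatrix ℝ).charpoly) = 0 := by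
    rw [map_sum]
    refine sum_eq_zero fun σ _ => ?_
    rw [aeval_def, ← eval_map, ← charpoly_map]
    exact h σ
  obtain ⟨m, rfl⟩ := Nat.exists_eq_add_of_le' hn
  rw [sum_charpoly_mul_permMatrix, Fintype.card_fin, add_tsub_cancel_right] at hsum
  have hfactor :
      Complex.I ^ m * ∑ σ : Perm (Fin (m + 1)), (Complex.I - ∑ i, (A i (σ i) : ℂ)) = 0 := by
    rw [← hsum, map_sum, mul_sum]
    refine sum_congr rfl fun σ _ => ?_
    simp only [Algebra.smul_def, algebraMap_eq, map_sum, aeval_sub, map_pow, aeval_X, map_mul,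
      aeval_C, Complex.coe_algebraMap]
    ring
  have hne : ∑ σ : Perm (Fin (m + 1)), (Complex.I - ∑ i, (A i (σ i) : ℂ)) ≠ 0 := fun h0 => by
    simpa using congrArg Complex.im h0
  exact hne ((mul_eq_zero.1 hfactor).resolve_left (pow_ne_zero _ Complex.I_ne_zero))
end

section
/- Let n ≥ 1 and let A = (a_{ℓ,m}) be a real n×n matrix. Then the sum over all permutations π of {1,…,n} of the characteristic polynomials of A·P_π equals n!·Xⁿ − (n−1)!·(∑_{ℓ=1}^n ∑_{m=1}^n a_{ℓ,m})·Xⁿ⁻¹ as a polynomial in ℝ[X]: ∑_{π ∈ S_n} charpoly(A·P_π) = n!·Xⁿ − (n−1)!·(∑_{ℓ,m} a_{ℓ,m})·Xⁿ⁻¹. -/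
/-!
Since `charpoly (A * Pπ) = charpoly (Pπ * A)`, the `i`-th row of the characteristic matrix is
`X eᵢ - A (π i)`. Expand its determinant multilinearly in the rows. A term taking two rows
`i ≠ j` from `-A` cancels, in the sum over `π`, against the same term for `π * swap i j`, which
only exchanges those two rows. What survives is `det (X • 1) = Xⁿ`, once for each of the `n!`
permutations, and for each row `i` the determinants with row `i` replaced by `-A (π i)`, equal to
`-A (π i) i * Xⁿ⁻¹`; each value `π i = m` is taken by `(n - 1)!` permutations.
-/

open Polynomial Equiv Finset
open scoped Nat

theorem Finset.sum_finset_eq_univ_add_sum_compl_singleton {ι β : Type*} [Fintype ι]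
    [DecidableEq ι] [AddCommMonoid β] (F : Finset ι → β)
    (hF : ∀ s : Finset ι, sᶜ.Nontrivial → F s = 0) :
    ∑ s, F s = F univ + ∑ i, F {i}ᶜ := by
  have hcompl : ∀ i, ({i}ᶜ : Finset ι) ≠ univ := fun i h => by simpa using congrArg (i ∈ ·) h
  rw [← sum_subset (subset_univ (insert univ (univ.image fun i => ({i}ᶜ : Finset ι)))),
    sum_insert (by simp [hcompl]),
    sum_image fun i _ j _ h => singleton_injective (compl_injective h)]
  intro s _ hs
  simp only [mem_insert, mem_image, mem_univ, true_and, not_or, not_exists] at hs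
  apply hF
  have hne : sᶜ.Nonempty := (compl_ne_univ_iff_nonempty sᶜ).1 (by rw [compl_compl]; exact hs.1)
  obtain ⟨i, hi⟩ | h := hne.exists_eq_singleton_or_nontrivial
  · exact absurd (by rw [← hi, compl_compl]) (hs.2 i)
  · exact h

namespace AlternatingMap

variable {R M N ι : Type*} [Semiring R] [AddCommMonoid M] [Module R M] [AddCommGroup N]
  [Module R N] [Fintype ι] [DecidableEq ι]

theorem sum_perm_map_piecewise_comp_eq_zero (f : M [⋀^ι]→ₗ[R] N) (u w : ι → M)
    {s : Finset ι} {i j : ι} (hi : i ∉ s) (hj : j ∉ s) (hij : i ≠ j) :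
    ∑ π : Perm ι, f (s.piecewise u (w ∘ π)) = 0 := by
  have hswap : ∀ π : Perm ι,
      s.piecewise u (w ∘ ⇑(π * swap i j)) = s.piecewise u (w ∘ π) ∘ swap i j := by
    intro π
    ext k
    by_cases hk : k ∈ s
    · have hfix : swap i j k = k :=
        swap_apply_of_ne_of_ne (ne_of_mem_of_not_mem hk hi) (ne_of_mem_of_not_mem hk hj)
      simp [hk, hfix]
    · have hout : swap i j k ∉ s := by
        rw [swap_apply_def]; split_ifs <;> assumption
      simp [hk, hout]
  refine sum_involution (fun π _ => π * swap i j) (fun π _ => ?_) (fun π _ _ => by simp [hij])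
    (fun _ _ => mem_univ _) (fun π _ => by simp [mul_assoc])
  rw [hswap, f.map_perm, Perm.sign_swap hij]
  simp

theorem sum_perm_map_add_comp (f : M [⋀^ι]→ₗ[R] N) (u w : ι → M) :
    ∑ π : Perm ι, f (u + w ∘ π) =
      (Fintype.card ι)! • f u + ∑ j, ∑ π : Perm ι, f (Function.update u j (w (π j))) := by
  simp_rw [f.map_add_univ]
  rw [sum_comm, Finset.sum_finset_eq_univ_add_sum_compl_singleton]
  · simp [piecewise_compl, piecewise_singleton, Fintype.card_perm]
  · rintro s ⟨i, hi, j, hj, hij⟩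
    exact f.sum_perm_map_piecewise_comp_eq_zero u w (mem_compl.1 hi) (mem_compl.1 hj) hij

end AlternatingMap

theorem Fin.sum_perm_apply {M : Type*} [AddCommMonoid M] {n : ℕ} (j : Fin n) (g : Fin n → M) :
    ∑ π : Perm (Fin n), g (π j) = (n - 1)! • ∑ i, g i := by
  obtain ⟨n, rfl⟩ := Nat.exists_eq_succ_of_ne_zero j.pos.ne'
  rw [← Fintype.sum_equiv (Equiv.mulRight (swap 0 j)) (fun π => g (π 0)) _
      (by simp [Perm.mul_apply]),
    ← Fintype.sum_equiv Perm.decomposeFin.symm (fun p => g p.1) _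
      (by simp [Perm.decomposeFin_symm_apply_zero])]
  simp [Fintype.sum_prod_type, Fintype.card_perm, Finset.smul_sum]

namespace Matrix

variable {R : Type*} [CommRing R]

theorem det_updateRow_smul_one {n : Type*} [Fintype n] [DecidableEq n] (r : R) (j : n)
    (v : n → R) :
    (updateRow (r • (1 : Matrix n n R)) j v).det = r ^ (Fintype.card n - 1) * v j := by
  rw [det_updateRow_smul_left, ← cramer_transpose_apply, transpose_one, cramer_one]
  rfl

theorem charpoly_mul_permMatrix {n : Type*} [Fintype n] [DecidableEq n] (A : Matrix n n R)
    (π : Perm n) :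
    (A * π.permMatrix R).charpoly = det ((X : R[X]) • 1 + (-A.map C).submatrix π id) := by
  rw [charpoly_mul_comm, Perm.permMatrix, PEquiv.toMatrix_toPEquiv_mul, charpoly,
    charmatrix, scalar_apply, ← smul_one_eq_diagonal, sub_eq_add_neg]
  rfl

theorem sum_charpoly_mul_permMatrix_s14 {n : ℕ} (A : Matrix (Fin n) (Fin n) R) :
    ∑ π : Perm (Fin n), (A * π.permMatrix R).charpoly =
      C (n ! : R) * X ^ n - C (((n - 1)! : R) * ∑ i, ∑ j, A i j) * X ^ (n - 1) := by
  let u : Fin n → Fin n → R[X] := (X : R[X]) • (1 : Matrix (Fin n) (Fin n) R[X])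
  let w : Fin n → Fin n → R[X] := fun m i => -C (A m i)
  have hrow : ∀ π : Perm (Fin n), (A * π.permMatrix R).charpoly = detRowAlternating (u + w ∘ π) :=
    charpoly_mul_permMatrix A
  have hdiag : detRowAlternating u = X ^ n := by
    change det ((X : R[X]) • (1 : Matrix (Fin n) (Fin n) R[X])) = X ^ n
    simp
  have hupd : ∀ j m, detRowAlternating (Function.update u j (w m)) =
      -(C (A m j) * X ^ (n - 1)) := fun j m =>
    (det_updateRow_smul_one (X : R[X]) j (w m)).trans (by simp only [w, Fintype.card_fin]; ring)
  rw [Finset.sum_congr rfl fun π _ => hrow π, AlternatingMap.sum_perm_map_add_comp]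
  simp only [hupd, hdiag, Fintype.card_fin]
  rw [Finset.sum_congr rfl fun j _ => Fin.sum_perm_apply j fun m => -(C (A m j) * X ^ (n - 1)),
    Finset.sum_comm (f := fun i j => A i j)]
  simp only [map_mul, map_natCast, map_sum, nsmul_eq_mul, Finset.mul_sum, Finset.sum_mul,
    Finset.sum_neg_distrib, mul_neg, mul_assoc, sub_eq_add_neg]

end Matrix

theorem stmt14_general (n : ℕ) (A : Matrix (Fin n) (Fin n) ℝ) :
    ∑ π : Equiv.Perm (Fin n), (A * π.permMatrix ℝ).charpoly =
      C (n.factorial : ℝ) * X ^ n -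
        C (((n - 1).factorial : ℝ) * ∑ i : Fin n, ∑ j : Fin n, A i j) * X ^ (n - 1) :=
  Matrix.sum_charpoly_mul_permMatrix_s14 A

theorem stmt14 (n : ℕ) (hn : 1 ≤ n) (A : Matrix (Fin n) (Fin n) ℝ) :
    ∑ π : Equiv.Perm (Fin n), (A * π.permMatrix ℝ).charpoly =
      C (n.factorial : ℝ) * X ^ n -
        C (((n - 1).factorial : ℝ) * ∑ i : Fin n, ∑ j : Fin n, A i j) * X ^ (n - 1) :=
  stmt14_general n A
end

section
/- Let H be a real Hilbert space and A : H → H a bounded surjective linear operator. Then the following are equivalent: (i) the bounded linear map H × H → H × H, (x, y) ↦ (x − A y, A x + y), is surjective; (ii) the bounded linear map H × H → H × H, (x, y) ↦ (x + A y, −A x + y), is surjective; (iii) the bounded linear operator Id + A ∘ A : H → H is surjective. -/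
theorem stmt16 (H : Type*) [NormedAddCommGroup H] [InnerProductSpace ℝ H]
    [CompleteSpace H] (A : H →L[ℝ] H) (hA : Function.Surjective A) :
    List.TFAE
      [Function.Surjective (fun p : H × H => (p.1 - A p.2, A p.1 + p.2)),
       Function.Surjective (fun p : H × H => (p.1 + A p.2, -A p.1 + p.2)),
       Function.Surjective (fun x : H => x + A (A x))] := by
  tfae_have 1 → 3 := by
    intro h c
    obtain ⟨⟨x, y⟩, hxy⟩ := h (c, 0)
    simp only [Prod.mk.injEq] at hxy
    refine ⟨x, ?_⟩
    have hy : y = -A x := by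
      have h2 := hxy.2
      linear_combination (norm := module) h2
    rw [← hxy.1, hy, map_neg, sub_neg_eq_add]
  tfae_have 2 → 3 := by
    intro h c
    obtain ⟨⟨x, y⟩, hxy⟩ := h (c, 0)
    simp only [Prod.mk.injEq] at hxy
    refine ⟨x, ?_⟩
    have hy : y = A x := by
      have h2 := hxy.2
      linear_combination (norm := module) h2
    rw [← hxy.1, hy]
  tfae_have 3 → 1 := by
    intro h ⟨a, b⟩
    obtain ⟨u, hu⟩ := h a
    obtain ⟨v, hv⟩ := h b
    refine ⟨(u + A v, -A u + v), ?_⟩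
    simp only [map_add, map_neg, Prod.mk.injEq]
    constructor
    · rw [← hu]; abel_nf
    · rw [← hv]; abel_nf
  tfae_have 3 → 2 := by
    intro h ⟨a, b⟩
    obtain ⟨u, hu⟩ := h a
    obtain ⟨v, hv⟩ := h b
    refine ⟨(u - A v, A u + v), ?_⟩
    simp only [map_add, map_sub, Prod.mk.injEq]
    constructor
    · rw [← hu]; abel_nf
    · rw [← hv]; abel_nf
  tfae_finish
end

section
/- Let H be a real Hilbert space and A : H → H a bounded surjective linear operator. If there exists a constant c > 1 such that ‖A* y‖ ≥ c·‖y‖ for all y ∈ H, then the bounded linear map H × H → H × H, (x, y) ↦ (x − A y, A x + y), is surjective. -/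
/-!
Eliminating `y = v - A x` reduces `(x - A y, A x + y) = (u, v)` to `(1 + A²) x = u + A v`.
The adjoint `1 + (A*)²` satisfies `‖(1 + (A*)²) y‖ ≥ (c² - 1) ‖y‖`, and an operator whose
adjoint is bounded below is surjective: `T T*` is then coercive, hence invertible.
-/

open ContinuousLinearMap

theorem surjective_sub_add_of_surjective_add_apply_apply {M F : Type*} [AddCommGroup M]
    [FunLike F M M] [AddMonoidHomClass F M M] (A : F)
    (hA : Function.Surjective fun x => x + A (A x)) :
    Function.Surjective fun p : M × M => (p.1 - A p.2, A p.1 + p.2) := by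
  rintro ⟨u, v⟩
  obtain ⟨x, hx⟩ := hA (u + A v)
  refine ⟨(x, v - A x), Prod.ext ?_ ?_⟩
  · simp only [map_sub] at hx ⊢
    rw [← add_right_cancel_iff (a := A v), ← hx]
    abel
  · simp

theorem ContinuousLinearMap.surjective_of_le_norm_adjoint {𝕜 E F : Type*} [RCLike 𝕜]
    [NormedAddCommGroup E] [InnerProductSpace 𝕜 E] [CompleteSpace E]
    [NormedAddCommGroup F] [InnerProductSpace 𝕜 F] [CompleteSpace F]
    (T : E →L[𝕜] F) {C : ℝ} (hC : 0 < C) (hT : ∀ y, C * ‖y‖ ≤ ‖adjoint T y‖) :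
    Function.Surjective T := by
  have hTT : IsUnit (T ∘L adjoint T) := by
    refine isUnit_of_forall_le_norm_inner_map _ (c := (C ^ 2).toNNReal) (by positivity)
      fun y => ?_
    have hy : ‖inner 𝕜 (T (adjoint T y)) y‖ = ‖adjoint T y‖ ^ 2 := by
      rw [← adjoint_inner_right, inner_self_eq_norm_sq_to_K, ← RCLike.ofReal_pow,
        RCLike.norm_ofReal, abs_of_nonneg (by positivity)]
    rw [comp_apply, hy, Real.coe_toNNReal _ (by positivity), ← mul_pow, mul_comm]
    exact pow_le_pow_left₀ (by positivity) (hT y) 2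
  intro y
  obtain ⟨x, hx⟩ := (isUnit_iff_bijective.mp hTT).2 y
  exact ⟨adjoint T x, hx⟩

theorem sq_sub_one_mul_norm_le_norm_add_apply_apply {E : Type*} [SeminormedAddCommGroup E]
    {B : E → E} {c : ℝ} (hc : 0 ≤ c) (hB : ∀ y, c * ‖y‖ ≤ ‖B y‖) (y : E) :
    (c ^ 2 - 1) * ‖y‖ ≤ ‖y + B (B y)‖ :=
  calc (c ^ 2 - 1) * ‖y‖ = c * (c * ‖y‖) - ‖y‖ := by ring
    _ ≤ c * ‖B y‖ - ‖y‖ := by gcongr; exact hB y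
    _ ≤ ‖B (B y)‖ - ‖y‖ := by gcongr; exact hB _
    _ ≤ ‖y + B (B y)‖ := by
      have := norm_sub_le (y + B (B y)) y
      rw [add_sub_cancel_left] at this
      linarith

theorem stmt17_general (H : Type*) [NormedAddCommGroup H] [InnerProductSpace ℝ H]
    [CompleteSpace H] (A : H →L[ℝ] H)
    (c : ℝ) (hc : 1 < c)
    (h : ∀ y : H, c * ‖y‖ ≤ ‖ContinuousLinearMap.adjoint A y‖) :
    Function.Surjective (fun p : H × H => (p.1 - A p.2, A p.1 + p.2)) := by
  apply surjective_sub_add_of_surjective_add_apply_apply A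
  have hadj : adjoint (1 + A ∘L A) = 1 + adjoint A ∘L adjoint A := by
    rw [map_add, adjoint_one, adjoint_comp]
  exact (1 + A ∘L A).surjective_of_le_norm_adjoint (C := c ^ 2 - 1) (by nlinarith)
    fun y => by
      simpa [hadj] using sq_sub_one_mul_norm_le_norm_add_apply_apply (by linarith) h y

theorem stmt17 (H : Type*) [NormedAddCommGroup H] [InnerProductSpace ℝ H]
    [CompleteSpace H] (A : H →L[ℝ] H) (hA : Function.Surjective A)
    (c : ℝ) (hc : 1 < c)
    (h : ∀ y : H, c * ‖y‖ ≤ ‖ContinuousLinearMap.adjoint A y‖) :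
    Function.Surjective (fun p : H × H => (p.1 - A p.2, A p.1 + p.2)) :=
  stmt17_general H A c hc h
end
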